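/- Let m, M, l, g > 0, let χ ∈ ℝ³, let 𝕀 be a symmetric 3×3 real matrix, and set m̄ = m + M. For R ∈ SO(3), y, ẏ ∈ ℝ³, Ṙ a 3×3 real matrix, and a = (𝐚, ã) ∈ ℝ³ × ℝ, define Ω(R,Ṙ) = ((RᵀṘ)₃₂, (RᵀṘ)₁₃, (RᵀṘ)₂₁) ∈ ℝ³, v = Rᵀẏ, K(Ω,v) = ½ Ω·𝕀Ω + m l v·(Ω×χ) + ½ m̄ ‖v‖², and the extended Lagrangian L_ext(R,y,Ṙ,ẏ,(𝐚,ã)) = K(Ω(R,Ṙ), Rᵀẏ) − g·(m l χ·(Rᵀ𝐚) + m̄ (y·𝐚 + ã)). Then for every R₀ ∈ SO(3) and y₀ ∈ ℝ³ one has L_ext(R₀R, R₀y + y₀, R₀Ṙ, R₀ẏ, (R₀𝐚, ã − y₀·(R₀𝐚))) = L_ext(R, y, Ṙ, ẏ, (𝐚, ã)) for all R ∈ SO(3), y, ẏ ∈ ℝ³, 3×3 matrices Ṙ, and (𝐚,ã) ∈ ℝ³ × ℝ. -/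

import Mathlib

open Matrix

/-- Body angular velocity `Ω(R,Ṙ) = ((RᵀṘ)₃₂, (RᵀṘ)₁₃, (RᵀṘ)₂₁)`. -/
noncomputable def bodyAngVel (R Rdot : Matrix (Fin 3) (Fin 3) ℝ) : Fin 3 → ℝ :=
  ![(Rᵀ * Rdot) 2 1, (Rᵀ * Rdot) 0 2, (Rᵀ * Rdot) 1 0]

/-- Kinetic energy `K(Ω,v) = ½ Ω·𝕀Ω + m l v·(Ω×χ) + ½ m̄ ‖v‖²`. -/
noncomputable def kinEnergy (m M l : ℝ) (χ : Fin 3 → ℝ) (I : Matrix (Fin 3) (Fin 3) ℝ)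
    (Ω v : Fin 3 → ℝ) : ℝ :=
  (1 / 2) * (Ω ⬝ᵥ I *ᵥ Ω) + m * l * (v ⬝ᵥ Ω ⨯₃ χ) + (1 / 2) * (m + M) * (v ⬝ᵥ v)

/-- The extended Lagrangian
`L_ext(R,y,Ṙ,ẏ,(𝐚,ã)) = K(Ω(R,Ṙ), Rᵀẏ) − g (m l χ·(Rᵀ𝐚) + m̄ (y·𝐚 + ã))`. -/
noncomputable def Lext (m M l g : ℝ) (χ : Fin 3 → ℝ) (I : Matrix (Fin 3) (Fin 3) ℝ)
    (R : Matrix (Fin 3) (Fin 3) ℝ) (y : Fin 3 → ℝ) (Rdot : Matrix (Fin 3) (Fin 3) ℝ)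
    (ydot : Fin 3 → ℝ) (a : Fin 3 → ℝ) (atil : ℝ) : ℝ :=
  kinEnergy m M l χ I (bodyAngVel R Rdot) (Rᵀ *ᵥ ydot)
    - g * (m * l * (χ ⬝ᵥ Rᵀ *ᵥ a) + (m + M) * (y ⬝ᵥ a + atil))

/-! Left multiplication by an orthogonal `R₀` cancels in every product `Rᵀ * _` and `Rᵀ *ᵥ _`
through which `R`, `Ṙ`, `ẏ` and `𝐚` enter the Lagrangian, and the potential term only sees
`y ⬝ᵥ 𝐚 + ã`, the pairing of the homogeneous point `(y, 1)` with `(𝐚, ã) ∈ (ℝ⁴)*`, which the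
action of `SE(3)` on points together with its dual action preserves. -/

section Orthogonal

variable {n R : Type*} [Fintype n] [DecidableEq n] [CommRing R] {Q : Matrix n n R}

theorem transpose_mul_mul_cancel_left (hQ : Qᵀ * Q = 1) (A B : Matrix n n R) :
    (Q * A)ᵀ * (Q * B) = Aᵀ * B := by
  rw [transpose_mul, mul_assoc, ← mul_assoc Qᵀ, hQ, one_mul]

theorem transpose_mul_mulVec_cancel_left (hQ : Qᵀ * Q = 1) (A : Matrix n n R) (v : n → R) :
    (Q * A)ᵀ *ᵥ (Q *ᵥ v) = Aᵀ *ᵥ v := by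
  rw [mulVec_mulVec, transpose_mul, mul_assoc, hQ, mul_one]

theorem mulVec_dotProduct_mulVec_of_transpose_mul_self (hQ : Qᵀ * Q = 1) (v w : n → R) :
    (Q *ᵥ v) ⬝ᵥ (Q *ᵥ w) = v ⬝ᵥ w := by
  rw [dotProduct_mulVec, ← mulVec_transpose, mulVec_mulVec, hQ, one_mulVec]

theorem affine_dotProduct_add_dual_eq (hQ : Qᵀ * Q = 1) (y y₀ a : n → R) (c : R) :
    (Q *ᵥ y + y₀) ⬝ᵥ Q *ᵥ a + (c - y₀ ⬝ᵥ Q *ᵥ a) = y ⬝ᵥ a + c := by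
  rw [add_dotProduct, mulVec_dotProduct_mulVec_of_transpose_mul_self hQ]
  ring

end Orthogonal

theorem bodyAngVel_mul_left {R₀ : Matrix (Fin 3) (Fin 3) ℝ} (hR₀ : R₀ᵀ * R₀ = 1)
    (R Rdot : Matrix (Fin 3) (Fin 3) ℝ) :
    bodyAngVel (R₀ * R) (R₀ * Rdot) = bodyAngVel R Rdot := by
  rw [bodyAngVel, bodyAngVel, transpose_mul_mul_cancel_left hR₀]

theorem Lext_invariant_general (m M l g : ℝ)
    (χ : Fin 3 → ℝ) (I : Matrix (Fin 3) (Fin 3) ℝ)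
    (R₀ : Matrix (Fin 3) (Fin 3) ℝ) (hR₀ : R₀ᵀ * R₀ = 1)
    (y₀ : Fin 3 → ℝ) :
    ∀ (R : Matrix (Fin 3) (Fin 3) ℝ), Rᵀ * R = 1 → R.det = 1 →
      ∀ (y : Fin 3 → ℝ) (Rdot : Matrix (Fin 3) (Fin 3) ℝ) (ydot : Fin 3 → ℝ)
        (a : Fin 3 → ℝ) (atil : ℝ),
        Lext m M l g χ I (R₀ * R) (R₀ *ᵥ y + y₀) (R₀ * Rdot) (R₀ *ᵥ ydot)
            (R₀ *ᵥ a) (atil - y₀ ⬝ᵥ R₀ *ᵥ a)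
          = Lext m M l g χ I R y Rdot ydot a atil := by
  intro R _ _ y Rdot ydot a atil
  simp only [Lext, bodyAngVel_mul_left hR₀, transpose_mul_mulVec_cancel_left hR₀,
    affine_dotProduct_add_dual_eq hR₀]

/-- The extended Lagrangian is invariant under the `SE(3)`-action
`(R,y,Ṙ,ẏ,(𝐚,ã)) ↦ (R₀R, R₀y + y₀, R₀Ṙ, R₀ẏ, (R₀𝐚, ã − y₀·(R₀𝐚)))`. -/
theorem Lext_invariant (m M l g : ℝ) (hm : 0 < m) (hM : 0 < M) (hl : 0 < l) (hg : 0 < g)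
    (χ : Fin 3 → ℝ) (I : Matrix (Fin 3) (Fin 3) ℝ) (hI : Iᵀ = I)
    (R₀ : Matrix (Fin 3) (Fin 3) ℝ) (hR₀ : R₀ᵀ * R₀ = 1) (hR₀det : R₀.det = 1)
    (y₀ : Fin 3 → ℝ) :
    ∀ (R : Matrix (Fin 3) (Fin 3) ℝ), Rᵀ * R = 1 → R.det = 1 →
      ∀ (y : Fin 3 → ℝ) (Rdot : Matrix (Fin 3) (Fin 3) ℝ) (ydot : Fin 3 → ℝ)
        (a : Fin 3 → ℝ) (atil : ℝ),
        Lext m M l g χ I (R₀ * R) (R₀ *ᵥ y + y₀) (R₀ * Rdot) (R₀ *ᵥ ydot)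
            (R₀ *ᵥ a) (atil - y₀ ⬝ᵥ R₀ *ᵥ a)
          = Lext m M l g χ I R y Rdot ydot a atil :=
  Lext_invariant_general m M l g χ I R₀ hR₀ y₀
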